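/- (Reification and reflection for the compact-term forcing structure.) Instantiate the forcing structure by: K = CNF (contexts are CNF types), le = the extension relation generated by reflexivity and le w₁ w₂ → le w₁ (con c b w₂), pforces w p = HSb w (prp p), Answer = Base, X w b = HSb w b. Then there are mutually defined functions: creify : ∀ c w, Cont cforces w c → HSc (explogn c w); creflect : ∀ c w, Cont cforces (ntimes c w) c; dreify : ∀ d w, Cont dforces w d → HSb w (bd d); and dreflect : ∀ d c₁ c₂ c₃, HSc (explogn c₁ (ntimes c₃ (con c₁ (bd d) c₂))) → Cont dforces (ntimes c₃ (con c₁ (bd d) c₂)) d. -/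

import Mathlib

namespace ExpLog

-- The mutually inductive grammar of exp-log normal forms:
-- conjunctive normal forms (CNF), disjunctive normal forms (DNF), and base types.
mutual
inductive CNF : Type
  | top : CNF
  | con : CNF → Base → CNF → CNF
  deriving Repr

inductive DNF : Type
  | two : CNF → CNF → DNF
  | dis : CNF → DNF → DNF
  deriving Repr

inductive Base : Type
  | prp : ℕ → Base
  | bd  : DNF → Base
  deriving Repr
end

/-- Exp-log normal forms: either a CNF or a DNF. -/
inductive ENF : Type
  | cnf : CNF → ENF
  | dnf : DNF → ENF
  deriving Repr

/-- Flattening of `+`-associativity (auxiliary). -/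
def nplus1 : DNF → ENF → DNF
  | .two c c0, .cnf c1 => .dis c (.two c0 c1)
  | .two c c0, .dnf d0 => .dis c (.dis c0 d0)
  | .dis c d0, e2 => .dis c (nplus1 d0 e2)

/-- Flattened n-ary sum of two ENFs. -/
def nplus : ENF → ENF → DNF
  | .cnf a, .cnf c => .two a c
  | .cnf a, .dnf d => .dis a d
  | .dnf b, e2 => nplus1 b e2

/-- Flattened n-ary product of two CNFs. -/
def ntimes : CNF → CNF → CNF
  | .top, c2 => c2
  | .con c10 d c13, c2 => .con c10 d (ntimes c13 c2)

/-- Distributivity of a CNF over a DNF. -/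
def distrib0 : CNF → DNF → ENF
  | c, .two c0 c1 => .dnf (.two (ntimes c c0) (ntimes c c1))
  | c, .dis c0 d0 =>
      .dnf (match distrib0 c d0 with
            | .cnf c1 => .two (ntimes c c0) c1
            | .dnf d1 => .dis (ntimes c c0) d1)

/-- Distributivity of a CNF over an ENF. -/
def distrib1 : CNF → ENF → ENF
  | c, .cnf a => .cnf (ntimes c a)
  | c, .dnf b => distrib0 c b

/-- The exp-log rewriting `b^(c₁+⋯+cₙ) ⇝ b^c₁ ⋯ b^cₙ`. -/
def explog0 : Base → DNF → CNF
  | b, .two c1 c2 => ntimes (.con c1 b .top) (.con c2 b .top)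
  | b, .dis c d3 => ntimes (.con c b .top) (explog0 b d3)

/-- The exp-log rewriting of `b^e` for an ENF exponent `e`. -/
def explog1 : Base → ENF → CNF
  | d, .cnf c => .con c d .top
  | d, .dnf d1 => explog0 d d1

/-- Distributivity of a DNF over an ENF. -/
def distribn : DNF → ENF → ENF
  | .two c c0, e2 => .dnf (nplus (distrib1 c e2) (distrib1 c0 e2))
  | .dis c d0, e2 => .dnf (nplus (distrib1 c e2) (distribn d0 e2))

/-- Distributivity of an ENF over an ENF. -/
def distrib : ENF → ENF → ENF
  | .cnf a, e2 => distrib1 a e2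
  | .dnf b, e2 => distribn b e2

/-- The exp-log rewriting of `c^{e₂}` (pointwise currying). -/
def explogn : CNF → ENF → CNF
  | .top, _ => .top
  | .con c1 d c2, e2 => ntimes (explog1 d (distrib1 c1 e2)) (explogn c2 e2)

/-- The CNF corresponding to an atomic type: `(1→p)×1`, identified with `p`. -/
def p2c (p : ℕ) : CNF := .con .top (.prp p) .top

def b2c : Base → CNF
  | .prp p => p2c p
  | .bd d => .con .top (.bd d) .top

/-- Coercion of an ENF to a CNF. -/
def enf2cnf : ENF → CNF
  | .cnf c => c
  | .dnf d => b2c (.bd d)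
-- The intrinsically typed compact terms: HSc (at product/CNF type) and HSb (at base type).
mutual
inductive HSc : CNF → Type
  | tt : HSc .top
  | pair {c1 b c2} : HSb c1 b → HSc c2 → HSc (.con c1 b c2)

inductive HSb : CNF → Base → Type
  | app {p c0 c1 c2} :
      HSc (explogn c1 (.cnf (ntimes c2 (.con c1 (.prp p) c0)))) →
      HSb (ntimes c2 (.con c1 (.prp p) c0)) (.prp p)
  | cas {d b c0 c1 c2 c3} :
      HSc (explogn c1 (.cnf (ntimes c2 (.con c1 (.bd d) c0)))) →
      HSc (explogn (explog0 b d) (.cnf (ntimes c3 (ntimes c2 (.con c1 (.bd d) c0))))) →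
      HSb (ntimes c3 (ntimes c2 (.con c1 (.bd d) c0))) b
  | wkn {c0 c1 b1 b} : HSb c0 b → HSb (.con c1 b1 c0) b
  | inl_two {c0 c1 c2} : HSc (explogn c1 (.cnf c0)) → HSb c0 (.bd (.two c1 c2))
  | inr_two {c0 c1 c2} : HSc (explogn c2 (.cnf c0)) → HSb c0 (.bd (.two c1 c2))
  | inl_dis {c0 c d} : HSc (explogn c (.cnf c0)) → HSb c0 (.bd (.dis c d))
  | inr_dis {c0 c d} : HSb c0 (.bd d) → HSb c0 (.bd (.dis c d))
end
/-- A forcing structure: a type of worlds, a preorder-like relation on worlds,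
an interpretation of atomic types, and a family of answer types. -/
structure ForcingStructure where
  K : Type
  le : K → K → Type
  pforces : K → ℕ → Type
  Answer : Type
  X : K → Answer → Type

/-- The continuation monad over a forcing structure
(`Cont FS f w` is the paper's `Cont f w x` with `f := fun w => f w x`). -/
def Cont (FS : ForcingStructure) (f : FS.K → Type) (w : FS.K) : Type :=
  ∀ (a : FS.Answer) (w' : FS.K), FS.le w w' →
    (∀ w'', FS.le w' w'' → f w'' → FS.X w'' a) → FS.X w' a
-- The forcing fixpoints on CNF, DNF and Base types.
mutual
def cforces (FS : ForcingStructure) : CNF → FS.K → Type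
  | .top => fun _ => PUnit
  | .con c1 b c2 => fun w =>
      (∀ w', FS.le w w' → Cont FS (cforces FS c1) w' → Cont FS (bforces FS b) w') ×
      (Cont FS (cforces FS c2) w)

def dforces (FS : ForcingStructure) : DNF → FS.K → Type
  | .two c1 c2 => fun w => Sum (Cont FS (cforces FS c1) w) (Cont FS (cforces FS c2) w)
  | .dis c1 d2 => fun w => Sum (Cont FS (cforces FS c1) w) (Cont FS (dforces FS d2) w)

def bforces (FS : ForcingStructure) : Base → FS.K → Type
  | .prp p => fun w => FS.pforces w p
  | .bd d => fun w => dforces FS d w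
end

/-- The forcing fixpoint on exp-log normal forms. -/
def eforces (FS : ForcingStructure) : ENF → FS.K → Type
  | .cnf c => cforces FS c
  | .dnf d => dforces FS d

-- The extension relation on CNF contexts.
inductive LeCNF : CNF → CNF → Type
  | refl {w} : LeCNF w w
  | cons {w1 w2 c b} : LeCNF w1 w2 → LeCNF w1 (.con c b w2)

/-- The syntactic forcing structure of the compact term calculus:
worlds are CNF contexts, `le` is context extension, atomic types are
interpreted by compact terms of atomic type, and the answer type at world `w`
and base type `b` is the set of compact terms `HSb w b`. -/
def structureHS : ForcingStructure where
  K := CNF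
  le := LeCNF
  pforces := fun w p => HSb w (.prp p)
  Answer := Base
  X := fun w b => HSb w b

/-! Normalization by evaluation for compact terms. Reification reads a term off a forcing and
reflection turns the variables of a context into forcings, by mutual recursion on types. A
hypothesis `c₁ → p` of atomic type is reflected by `app`; one of type `c₁ → d` with `d`
disjunctive is reflected by `cas`, whose branches come from running the continuation once per
disjunct `cᵢ`, in the context extended by `cᵢ` and with `cᵢ` itself reflected. Every extension of
a context `w` has the form `ntimes c w`, which is what lets the indices of `app` and `cas` match. -/

namespace LeCNF

def trans : ∀ {w₁ w₂ w₃ : CNF}, LeCNF w₁ w₂ → LeCNF w₂ w₃ → LeCNF w₁ w₃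
  | _, _, _, h, .refl => h
  | _, _, _, h, .cons h' => .cons (trans h h')

def ntimes : ∀ (c w : CNF), LeCNF w (ExpLog.ntimes c w)
  | .top, _ => .refl
  | .con _ _ c₂, w => .cons (ntimes c₂ w)

def decomp : ∀ {w₀ w₁ : CNF}, LeCNF w₀ w₁ → Σ' c : CNF, w₁ = ExpLog.ntimes c w₀
  | _, _, .refl => ⟨.top, rfl⟩
  | _, _, .cons (c := c) (b := b) h =>
      let ⟨c', e⟩ := decomp h
      ⟨.con c b c', e ▸ rfl⟩

end LeCNF

section Monad

variable {FS : ForcingStructure} {f g : FS.K → Type} {w w' : FS.K}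
  (refl : ∀ {w : FS.K}, FS.le w w)
  (trans : ∀ {u v w : FS.K}, FS.le u v → FS.le v w → FS.le u w)

def Cont.mono (h : FS.le w w') (k : Cont FS f w) : Cont FS f w' :=
  fun a _ h' φ => k a _ (trans h h') φ

def Cont.pure (mono : ∀ {w w' : FS.K}, FS.le w w' → f w → f w') (v : f w) : Cont FS f w :=
  fun _ w' h φ => φ w' refl (mono h v)

def Cont.bind (k : Cont FS f w) (m : ∀ w', FS.le w w' → f w' → Cont FS g w') :
    Cont FS g w :=
  fun a w' h φ => k a w' h fun w'' h'' v =>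
    m w'' (trans h h'') v a w'' refl fun w₃ h₃ u => φ w₃ (trans h'' h₃) u

def Cont.snd {c₁ : CNF} {b : Base} {c₂ : CNF} (k : Cont FS (cforces FS (.con c₁ b c₂)) w) :
    Cont FS (cforces FS c₂) w :=
  k.bind refl trans fun _ _ v => v.2

def cforces.mono : ∀ (c : CNF) {w w' : FS.K}, FS.le w w' → cforces FS c w → cforces FS c w'
  | .top, _, _, _, _ => ⟨⟩
  | .con _ _ _, _, _, h, v => ⟨fun _ h' => v.1 _ (trans h h'), v.2.mono trans h⟩

def dforces.mono : ∀ (d : DNF) {w w' : FS.K}, FS.le w w' → dforces FS d w → dforces FS d w'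
  | .two _ _, _, _, h, v => Sum.map (Cont.mono trans h) (Cont.mono trans h) v
  | .dis _ _, _, _, h, v => Sum.map (Cont.mono trans h) (Cont.mono trans h) v

end Monad

mutual

def creify : ∀ (c w : CNF),
    Cont structureHS (cforces structureHS c) w → HSc (explogn c (.cnf w))
  | .top, _, _ => .tt
  | .con c₁ b c₂, w, k =>
      .pair
        (k b _ (.ntimes c₁ w) fun w' h v =>
          v.1 w' .refl ((creflect c₁ w).mono LeCNF.trans h) b w' .refl
            fun w'' _ u => breify b w'' u)
        (creify c₂ w (k.snd LeCNF.refl LeCNF.trans))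
termination_by c => 2 * sizeOf c

def creflect : ∀ (c w : CNF), Cont structureHS (cforces structureHS c) (ntimes c w)
  | .top, _ => Cont.pure LeCNF.refl (cforces.mono LeCNF.trans .top) ⟨⟩
  | .con c₁ b c₂, w => Cont.pure LeCNF.refl (cforces.mono LeCNF.trans (.con c₁ b c₂))
      ⟨fun _ h k => breflect b c₁ _ h k, (creflect c₂ w).mono LeCNF.trans (.cons .refl)⟩
termination_by c => 2 * sizeOf c

-- Reflection of the hypothesis `c₁ → b` that heads a subcontext of `w`.
def breflect : ∀ (b : Base) (c₁ c₀ : CNF) {w : CNF}, LeCNF (.con c₁ b c₀) w →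
    Cont structureHS (cforces structureHS c₁) w → Cont structureHS (bforces structureHS b) w
  | .prp _, c₁, _, _, h, k => fun _ _ h' φ =>
      match (h.trans h').decomp with
      | ⟨_, e⟩ => by
          subst e
          exact φ _ .refl (.app (creify c₁ _ (k.mono LeCNF.trans h')))
  | .bd d, c₁, c₀, _, h, k => fun a _ h' φ =>
      match (h.trans h').decomp with
      | ⟨c, e⟩ => by
          subst e
          exact dreflect d c₁ c₀ c (creify c₁ _ (k.mono LeCNF.trans h')) a _ .refl φ
termination_by b c₁ => 2 * (sizeOf b + sizeOf c₁)

def breify : ∀ (b : Base) (w : CNF), bforces structureHS b w → HSb w b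
  | .prp _, _, v => v
  | .bd d, w, v => dreifyValue d w v
termination_by b => 2 * sizeOf b

def dreifyValue : ∀ (d : DNF) (w : CNF), dforces structureHS d w → HSb w (.bd d)
  | .two c₁ _, w, .inl k => .inl_two (creify c₁ w k)
  | .two _ c₂, w, .inr k => .inr_two (creify c₂ w k)
  | .dis c₁ _, w, .inl k => .inl_dis (creify c₁ w k)
  | .dis _ d₂, w, .inr k => .inr_dis (dreify d₂ w k)
termination_by d => 2 * sizeOf d

def dreify (d : DNF) (w : CNF) (k : Cont structureHS (dforces structureHS d) w) :
    HSb w (.bd d) :=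
  k (.bd d) w .refl fun w' _ v => dreifyValue d w' v
termination_by 2 * sizeOf d + 1

def dreflect : ∀ (d : DNF) (c₁ c₂ c₃ : CNF),
    HSc (explogn c₁ (.cnf (ntimes c₃ (.con c₁ (.bd d) c₂)))) →
    Cont structureHS (dforces structureHS d) (ntimes c₃ (.con c₁ (.bd d) c₂))
  | d, _, _, _, t => fun a _ h φ =>
      match h.decomp with
      | ⟨_, e⟩ => by
          subst e
          exact .cas t (caseBranches d a _ φ)
termination_by d => 2 * sizeOf d + 1

def caseBranches : ∀ (d : DNF) (a : Base) (w : CNF),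
    (∀ w', LeCNF w w' → dforces structureHS d w' → HSb w' a) →
    HSc (explogn (explog0 a d) (.cnf w))
  | .two c₁ c₂, _, w, φ =>
      .pair (φ _ (.ntimes c₁ w) (.inl (creflect c₁ w)))
        (.pair (φ _ (.ntimes c₂ w) (.inr (creflect c₂ w))) .tt)
  | .dis c₁ d₂, a, w, φ =>
      .pair (φ _ (.ntimes c₁ w) (.inl (creflect c₁ w)))
        (caseBranches d₂ a w fun w' h v =>
          φ w' h (.inr (Cont.pure LeCNF.refl (dforces.mono LeCNF.trans d₂) v)))
termination_by d => 2 * sizeOf d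

end

/-- Reification and reflection for the compact-term forcing
structure: there are mutually defined functions `creify`, `creflect`, `dreify`
and `dreflect` with the stated types. -/
theorem creify_creflect_dreify_dreflect_exist :
    Nonempty
      ((∀ (c : CNF) (w : CNF),
          Cont structureHS (cforces structureHS c) w → HSc (explogn c (.cnf w))) ×
       (∀ (c : CNF) (w : CNF),
          Cont structureHS (cforces structureHS c) (ntimes c w)) ×
       (∀ (d : DNF) (w : CNF),
          Cont structureHS (dforces structureHS d) w → HSb w (.bd d)) ×
       (∀ (d : DNF) (c1 c2 c3 : CNF),
          HSc (explogn c1 (.cnf (ntimes c3 (.con c1 (.bd d) c2)))) →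
          Cont structureHS (dforces structureHS d) (ntimes c3 (.con c1 (.bd d) c2)))) :=
  ⟨creify, creflect, dreify, dreflect⟩

end ExpLog
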